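/- For every unit vector ψ in H₁⊗⋯⊗Hₙ, where H₁, …, Hₙ are nonzero finite-dimensional complex inner product spaces, there exist unit vectors a₁ ∈ H₁, …, aₙ ∈ Hₙ such that for every index k and every vector b ∈ Hₖ with b ⊥ aₖ one has ⟨a₁⊗⋯⊗b⊗⋯⊗aₙ, ψ⟩ = 0 (the vector a₁⊗⋯⊗b⊗⋯⊗aₙ is obtained by replacing the k-th factor aₖ with b). Moreover a₁⊗⋯⊗aₙ can be chosen to maximize |⟨a₁⊗⋯⊗aₙ, ψ⟩| over all product states. -/

import Mathlib

/-! The overlap `‖⟪a₁ ⊗ ⋯ ⊗ aₙ, ψ⟫‖` is continuous on the compact product of unit spheres, so it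
has a maximizer `a`. With all factors but the `k`-th fixed, `b ↦ a₁ ⊗ ⋯ ⊗ b ⊗ ⋯ ⊗ aₙ` is linear,
so the overlap becomes `⟪b, w⟫` with `w` its adjoint applied to `ψ`. Then `aₖ` maximizes `‖⟪u, w⟫‖`
over unit vectors `u`, which is the equality case of Cauchy–Schwarz: `w` is a multiple of `aₖ`,
hence orthogonal to every `b ⊥ aₖ`. -/

open scoped ComplexInnerProductSpace

/-- The product state `a₁ ⊗ ⋯ ⊗ aₙ` of `n` parties with local dimensions `d k`, as a vector
in `H₁ ⊗ ⋯ ⊗ Hₙ ≃ ℂ^(Π k, d k)` with the standard inner product, so that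
`⟪prodState a, prodState x⟫ = ∏ k, ⟪a k, x k⟫`. -/
noncomputable def prodState {n : ℕ} {d : Fin n → ℕ}
    (a : ∀ k, EuclideanSpace ℂ (Fin (d k))) :
    EuclideanSpace ℂ (∀ k, Fin (d k)) :=
  WithLp.toLp 2 (fun f => ∏ k, a k (f k))

open scoped InnerProductSpace

/-- `MultilinearMap.piFamily` evaluates the product map `mkPiAlgebra` at the `f`-th coordinates,
giving the entry `∏ k, a k (f k)` of `prodState a`. -/
noncomputable def prodStateMultilinear (n : ℕ) (d : Fin n → ℕ) :
    MultilinearMap ℂ (fun k => EuclideanSpace ℂ (Fin (d k))) (EuclideanSpace ℂ (∀ k, Fin (d k))) :=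
  (WithLp.linearEquiv 2 ℂ _).symm.toLinearMap.compMultilinearMap
    ((MultilinearMap.piFamily fun _ => MultilinearMap.mkPiAlgebra ℂ (Fin n) ℂ).compLinearMap
      fun _ => (WithLp.linearEquiv 2 ℂ _).toLinearMap)

theorem prodStateMultilinear_apply {n : ℕ} {d : Fin n → ℕ}
    (a : ∀ k, EuclideanSpace ℂ (Fin (d k))) :
    prodStateMultilinear n d a = prodState a := rfl

theorem continuous_prodState {n : ℕ} {d : Fin n → ℕ} :
    Continuous (prodState : (∀ k, EuclideanSpace ℂ (Fin (d k))) → _) :=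
  (PiLp.continuous_toLp 2 _).comp <| continuous_pi fun f =>
    continuous_finsetProd _ fun k _ =>
      (EuclideanSpace.proj (f k)).continuous.comp (continuous_apply k)

theorem inner_prodState_update {n : ℕ} {d : Fin n → ℕ} (a : ∀ k, EuclideanSpace ℂ (Fin (d k)))
    (k : Fin n) (b : EuclideanSpace ℂ (Fin (d k))) (ψ : EuclideanSpace ℂ (∀ k, Fin (d k))) :
    ⟪prodState (Function.update a k b), ψ⟫ =
      ⟪b, LinearMap.adjoint ((prodStateMultilinear n d).toLinearMap a k) ψ⟫ := by
  rw [LinearMap.adjoint_inner_right, MultilinearMap.toLinearMap_apply, prodStateMultilinear_apply]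

theorem inner_eq_zero_of_isMaxOn_sphere {𝕜 E : Type*} [RCLike 𝕜] [NormedAddCommGroup E]
    [InnerProductSpace 𝕜 E] {a w : E} (ha : ‖a‖ = 1)
    (hmax : IsMaxOn (fun u => ‖⟪u, w⟫_𝕜‖) (Metric.sphere 0 1) a) {b : E} (hb : ⟪b, a⟫_𝕜 = 0) :
    ⟪b, w⟫_𝕜 = 0 := by
  rcases eq_or_ne w 0 with rfl | hw
  · exact inner_zero_right b
  have hw' : ‖w‖ ≠ 0 := norm_ne_zero_iff.mpr hw
  have hunit : (‖w‖⁻¹ : 𝕜) • w ∈ Metric.sphere (0 : E) 1 := by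
    simp [norm_smul, hw']
  have hCS : ‖⟪a, w⟫_𝕜‖ = ‖a‖ * ‖w‖ := by
    refine le_antisymm (norm_inner_le_norm a w) ?_
    calc ‖a‖ * ‖w‖ = ‖⟪(‖w‖⁻¹ : 𝕜) • w, w⟫_𝕜‖ := by
          simp [inner_smul_left, inner_self_eq_norm_sq_to_K, ha, hw', sq]
      _ ≤ ‖⟪a, w⟫_𝕜‖ := hmax hunit
  obtain ⟨r, -, rfl⟩ := (norm_inner_eq_norm_iff (by simp [← norm_ne_zero_iff, ha]) hw).mp hCS
  rw [inner_smul_right, hb, mul_zero]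

theorem IsMaxOn.update_univ_pi {ι : Type*} [DecidableEq ι] {α : ι → Type*} {β : Type*}
    [Preorder β] {F : (∀ i, α i) → β} {s : ∀ i, Set (α i)} {a : ∀ i, α i}
    (h : IsMaxOn F (Set.univ.pi s) a)
    (ha : a ∈ Set.univ.pi s) (i : ι) :
    IsMaxOn (fun x => F (Function.update a i x)) (s i) (a i) := fun x hx => by
  simpa using h ((Set.update_mem_pi_iff_of_mem ha).mpr fun _ => hx)

theorem exists_maximizing_product_state (n : ℕ) (d : Fin n → ℕ) (hd : ∀ k, 0 < d k)
    (ψ : EuclideanSpace ℂ (∀ k, Fin (d k))) :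
    ∃ a : ∀ k, EuclideanSpace ℂ (Fin (d k)),
      (∀ k, ‖a k‖ = 1) ∧
      (∀ (k : Fin n) (b : EuclideanSpace ℂ (Fin (d k))), ⟪b, a k⟫ = 0 →
        ⟪prodState (Function.update a k b), ψ⟫ = 0) ∧
      (∀ c : ∀ k, EuclideanSpace ℂ (Fin (d k)), (∀ k, ‖c k‖ = 1) →
        ‖⟪prodState c, ψ⟫‖ ≤ ‖⟪prodState a, ψ⟫‖) := by
  classical
  set S : Set (∀ k, EuclideanSpace ℂ (Fin (d k))) := Set.univ.pi fun _ => Metric.sphere 0 1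
  have hS : ∀ c, c ∈ S ↔ ∀ k, ‖c k‖ = 1 := by simp [S]
  have hne : S.Nonempty := Set.univ_pi_nonempty_iff.mpr fun k =>
    have : Nonempty (Fin (d k)) := ⟨⟨0, hd k⟩⟩
    NormedSpace.sphere_nonempty.mpr zero_le_one
  have hcont : Continuous fun c => ‖⟪prodState c, ψ⟫‖ :=
    (continuous_prodState.inner continuous_const).norm
  obtain ⟨a, haS, hmax⟩ :=
    (isCompact_univ_pi fun _ => isCompact_sphere 0 1).exists_isMaxOn hne hcont.continuousOn
  refine ⟨a, (hS a).mp haS, fun k b hb => ?_, fun c hc => hmax ((hS c).mpr hc)⟩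
  rw [inner_prodState_update]
  refine inner_eq_zero_of_isMaxOn_sphere ((hS a).mp haS k) ?_ hb
  simpa only [inner_prodState_update] using hmax.update_univ_pi haS k
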